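/- In the hyperbolic plane, if γ is a complete geodesic and α is an arc-length parameterized geodesic segment disjoint from γ, then the function t ↦ dist(α(t), γ)² is smooth and has positive second derivative at every t. -/

import Mathlib

/-! Statement 1: In the hyperbolic plane, if γ is a complete geodesic and α an arc-length
geodesic segment disjoint from γ, then t ↦ dist(α(t), γ)² is smooth with positive second
derivative at every parameter of the segment. -/

open Metric Set

local notation "ℍ" => UpperHalfPlane

/-- A unit-speed (arc-length) geodesic parameterization on a set of times. -/
def IsUnitSpeedGeodesicOn (α : ℝ → ℍ) (I : Set ℝ) : Prop :=
  ∀ s ∈ I, ∀ t ∈ I, dist (α s) (α t) = |s - t|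

noncomputable section
open Real


/-- The standard vertical geodesic `t ↦ i·eᵗ`. -/
def sig (t : ℝ) : ℍ := UpperHalfPlane.mk ⟨0, Real.exp t⟩ (by simpa using Real.exp_pos t)

@[simp] lemma sig_re (t : ℝ) : (sig t).re = 0 := rfl
@[simp] lemma sig_im (t : ℝ) : (sig t).im = Real.exp t := rfl

lemma dist_sig_sig (s t : ℝ) : dist (sig s) (sig t) = |s - t| := by
  rw [UpperHalfPlane.dist_of_re_eq (z := sig s) (w := sig t) rfl]
  simp [Real.dist_eq, Real.log_exp]

lemma cosh_dist_sig (z : ℍ) (t : ℝ) :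
    Real.cosh (dist z (sig t)) =
      (z.re ^ 2 + z.im ^ 2 + Real.exp t ^ 2) / (2 * z.im * Real.exp t) := by
  have h := UpperHalfPlane.cosh_dist z (sig t)
  rw [h]
  have hd : ‖(z : ℂ) - (sig t : ℂ)‖ ^ 2
      = z.re ^ 2 + (z.im - Real.exp t) ^ 2 := by
    rw [Complex.sq_norm, Complex.normSq_apply]
    have h1 : ((z : ℂ) - (sig t : ℂ)).re = z.re := by
      simp [Complex.sub_re, UpperHalfPlane.coe_re]
    have h2 : ((z : ℂ) - (sig t : ℂ)).im = z.im - Real.exp t := by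
      simp [Complex.sub_im, UpperHalfPlane.coe_im]
    rw [h1, h2]; ring
  rw [Complex.dist_eq, hd, sig_im]
  have h1 : z.im > 0 := z.im_pos
  have h2 : Real.exp t > 0 := Real.exp_pos t
  field_simp
  ring

lemma sqrt_aux (z : ℍ) : Real.sqrt (1 + (|z.re| / z.im) ^ 2)
    = Real.sqrt (z.re ^ 2 + z.im ^ 2) / z.im := by
  have hv : (0:ℝ) < z.im := z.im_pos
  have h1 : 1 + (|z.re| / z.im) ^ 2 = (z.re ^ 2 + z.im ^ 2) / z.im ^ 2 := by
    field_simp [sq_abs]; linarith [sq_abs z.re]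
  rw [h1, Real.sqrt_div (by positivity), Real.sqrt_sq hv.le]

lemma le_dist_sig (z : ℍ) (t : ℝ) : Real.arsinh (|z.re| / z.im) ≤ dist z (sig t) := by
  have hv : (0:ℝ) < z.im := z.im_pos
  have hy : (0:ℝ) < Real.exp t := Real.exp_pos t
  have hr : (0:ℝ) ≤ Real.sqrt (z.re ^ 2 + z.im ^ 2) := Real.sqrt_nonneg _
  have hr2 : Real.sqrt (z.re ^ 2 + z.im ^ 2) ^ 2 = z.re ^ 2 + z.im ^ 2 :=
    Real.sq_sqrt (by positivity)
  have hcosh : Real.cosh (Real.arsinh (|z.re| / z.im)) ≤ Real.cosh (dist z (sig t)) := by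
    rw [Real.cosh_arsinh, sqrt_aux, cosh_dist_sig]
    rw [div_le_div_iff₀ hv (by positivity)]
    nlinarith [sq_nonneg (Real.sqrt (z.re ^ 2 + z.im ^ 2) - Real.exp t)]
  have := Real.cosh_le_cosh.mp hcosh
  rwa [abs_of_nonneg (Real.arsinh_nonneg_iff.mpr (by positivity)),
    abs_of_nonneg dist_nonneg] at this

lemma dist_sig_eq (z : ℍ) :
    dist z (sig (Real.log (Real.sqrt (z.re ^ 2 + z.im ^ 2)))) = Real.arsinh (|z.re| / z.im) := by
  have hv : (0:ℝ) < z.im := z.im_pos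
  have hrpos : (0:ℝ) < Real.sqrt (z.re ^ 2 + z.im ^ 2) := Real.sqrt_pos.mpr (by positivity)
  have hr2 : Real.sqrt (z.re ^ 2 + z.im ^ 2) ^ 2 = z.re ^ 2 + z.im ^ 2 :=
    Real.sq_sqrt (by positivity)
  have hexp : Real.exp (Real.log (Real.sqrt (z.re ^ 2 + z.im ^ 2)))
      = Real.sqrt (z.re ^ 2 + z.im ^ 2) := Real.exp_log hrpos
  have hcosh : Real.cosh (dist z (sig (Real.log (Real.sqrt (z.re ^ 2 + z.im ^ 2)))))
      = Real.cosh (Real.arsinh (|z.re| / z.im)) := by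
    rw [Real.cosh_arsinh, sqrt_aux, cosh_dist_sig, hexp]
    field_simp
    nlinarith [hr2]
  have h2 := Real.cosh_le_cosh.mp hcosh.le
  have h3 := Real.cosh_le_cosh.mp hcosh.ge
  have h4 : |dist z (sig (Real.log (Real.sqrt (z.re ^ 2 + z.im ^ 2))))|
      = |Real.arsinh (|z.re| / z.im)| := le_antisymm h2 h3
  rwa [abs_of_nonneg dist_nonneg,
    abs_of_nonneg (Real.arsinh_nonneg_iff.mpr (by positivity))] at h4

lemma infDist_sig (z : ℍ) : infDist z (Set.range sig) = Real.arsinh (|z.re| / z.im) := by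
  apply le_antisymm
  · exact (dist_sig_eq z) ▸ infDist_le_dist_of_mem ⟨_, rfl⟩
  · rw [infDist_eq_iInf]
    exact le_ciInf fun ⟨w, t, ht⟩ => ht ▸ le_dist_sig z t

lemma mem_range_sig_iff (z : ℍ) : z ∈ Set.range sig ↔ z.re = 0 := by
  constructor
  · rintro ⟨t, rfl⟩; rfl
  · intro h
    refine ⟨Real.log z.im, ?_⟩
    apply UpperHalfPlane.ext'
    · simp [h]
    · simp [Real.exp_log z.im_pos]

abbrev SL2 := Matrix.SpecialLinearGroup (Fin 2) ℝ

lemma SL2.det_eq (g : SL2) : g 0 0 * g 1 1 - g 0 1 * g 1 0 = 1 := by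
  have := g.2
  rwa [Matrix.det_fin_two] at this

lemma sl2_smul_coe (g : SL2) (z : ℍ) :
    ((g • z : ℍ) : ℂ) = ((g 0 0 : ℝ) * z + (g 0 1 : ℝ)) / ((g 1 0 : ℝ) * z + (g 1 1 : ℝ)) := by
  rw [UpperHalfPlane.specialLinearGroup_apply]
  simp [UpperHalfPlane.coe_mk]

lemma sl2_denom_ne_zero (c d : ℝ) (z : ℍ) (h : ¬(c = 0 ∧ d = 0)) :
    ((c : ℂ) * z + d) ≠ 0 := by
  intro h0
  have him : c * z.im = 0 := by
    have := congrArg Complex.im h0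
    simpa [Complex.add_im, Complex.mul_im, UpperHalfPlane.coe_im, UpperHalfPlane.coe_re] using this
  have hc : c = 0 := by
    rcases mul_eq_zero.mp him with h | h
    · exact h
    · exact absurd h z.im_ne_zero
  have hd : d = 0 := by
    have := congrArg Complex.re h0
    simpa [hc, Complex.add_re, Complex.mul_re, UpperHalfPlane.coe_re] using this
  exact h ⟨hc, hd⟩

lemma den_pos (c d : ℝ) (h : ¬(c = 0 ∧ d = 0)) (z : ℍ) :
    0 < (c * z.re + d) ^ 2 + c ^ 2 * z.im ^ 2 := by
  rcases eq_or_ne c 0 with hc | hc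
  · have hd : d ≠ 0 := fun hd => h ⟨hc, hd⟩
    subst hc
    simpa using by positivity
  · have h1 : 0 < c ^ 2 * z.im ^ 2 := by
      have := z.im_pos; positivity
    nlinarith [sq_nonneg (c * z.re + d)]

lemma det_ne_both_zero {a b c d : ℝ} (h : a * d - b * c = 1) : ¬(c = 0 ∧ d = 0) := by
  rintro ⟨hc, hd⟩
  rw [hc, hd] at h
  simp at h

lemma coe_parts (a b : ℝ) (z : ℍ) :
    ((a : ℂ) * z + b).re = a * z.re + b ∧ ((a : ℂ) * z + b).im = a * z.im := by
  constructor
  · simp [Complex.add_re, Complex.mul_re, UpperHalfPlane.coe_re, UpperHalfPlane.coe_im]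
  · simp [Complex.add_im, Complex.mul_im, UpperHalfPlane.coe_im, UpperHalfPlane.coe_re]

lemma mobius_im (a b c d : ℝ) (h : a * d - b * c = 1) (z : ℍ) :
    (((a : ℂ) * z + b) / ((c : ℂ) * z + d)).im
      = z.im / ((c * z.re + d) ^ 2 + c ^ 2 * z.im ^ 2) := by
  obtain ⟨hre, him⟩ := coe_parts c d z
  obtain ⟨hre', him'⟩ := coe_parts a b z
  rw [Complex.div_im, Complex.normSq_apply, hre, him, hre', him']
  have heq : (c * z.re + d) * (c * z.re + d) + c * z.im * (c * z.im)
      = (c * z.re + d) ^ 2 + c ^ 2 * z.im ^ 2 := by ring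
  rw [heq, div_sub_div_same]
  congr 1
  linear_combination z.im * h

lemma mobius_re (a b c d : ℝ) (z : ℍ) :
    (((a : ℂ) * z + b) / ((c : ℂ) * z + d)).re
      = (a * c * (z.re ^ 2 + z.im ^ 2) + (a * d + b * c) * z.re + b * d)
        / ((c * z.re + d) ^ 2 + c ^ 2 * z.im ^ 2) := by
  obtain ⟨hre, him⟩ := coe_parts c d z
  obtain ⟨hre', him'⟩ := coe_parts a b z
  rw [Complex.div_re, Complex.normSq_apply, hre, him, hre', him']
  have heq : (c * z.re + d) * (c * z.re + d) + c * z.im * (c * z.im)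
      = (c * z.re + d) ^ 2 + c ^ 2 * z.im ^ 2 := by ring
  rw [heq, ← add_div]
  congr 1
  ring

lemma sl2_smul_im (g : SL2) (z : ℍ) :
    (g • z).im = z.im / ((g 1 0 * z.re + g 1 1) ^ 2 + (g 1 0) ^ 2 * z.im ^ 2) := by
  have h : (g • z).im = ((g • z : ℍ) : ℂ).im := (UpperHalfPlane.coe_im _).symm
  rw [h, sl2_smul_coe, mobius_im _ _ _ _ (SL2.det_eq g) z]

lemma sl2_smul_re (g : SL2) (z : ℍ) :
    (g • z).re = (g 0 0 * g 1 0 * (z.re ^ 2 + z.im ^ 2) + (g 0 0 * g 1 1 + g 0 1 * g 1 0) * z.re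
        + g 0 1 * g 1 1) / ((g 1 0 * z.re + g 1 1) ^ 2 + (g 1 0) ^ 2 * z.im ^ 2) := by
  have h : (g • z).re = ((g • z : ℍ) : ℂ).re := (UpperHalfPlane.coe_re _).symm
  rw [h, sl2_smul_coe, mobius_re]

lemma sl2_smul_sig_re (g : SL2) (τ : ℝ) :
    (g • sig τ).re = (g 0 0 * g 1 0 * Real.exp τ + g 0 1 * g 1 1 * Real.exp (-τ))
      * (g • sig τ).im := by
  rw [sl2_smul_re, sl2_smul_im]
  have he : Real.exp τ ≠ 0 := (Real.exp_pos τ).ne'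
  have hD0 : 0 < (g 1 0 * (sig τ).re + g 1 1) ^ 2 + (g 1 0) ^ 2 * (sig τ).im ^ 2 :=
    den_pos _ _ (det_ne_both_zero (SL2.det_eq g)) _
  have hD : (0:ℝ) < (g 1 0) ^ 2 * Real.exp τ ^ 2 + (g 1 1) ^ 2 := by
    rw [sig_re, sig_im] at hD0; nlinarith [hD0]
  rw [sig_re, sig_im] at *
  rw [Real.exp_neg]
  field_simp
  ring

/-- Matrix constructions -/
def mT (x : ℝ) : SL2 := ⟨!![1, x; 0, 1], by simp [Matrix.det_fin_two_of]⟩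

def mD (u : ℝ) (hu : 0 < u) : SL2 :=
  ⟨!![Real.sqrt u, 0; 0, (Real.sqrt u)⁻¹], by
    have : Real.sqrt u ≠ 0 := (Real.sqrt_pos.mpr hu).ne'
    simp [Matrix.det_fin_two_of, this]⟩

def mK (c s : ℝ) (h : c ^ 2 + s ^ 2 = 1) : SL2 :=
  ⟨!![c, s; -s, c], by rw [Matrix.det_fin_two_of]; nlinarith⟩

def mS : SL2 := ⟨!![0, -1; 1, 0], by simp [Matrix.det_fin_two_of]⟩

@[simp] lemma mT00 (x : ℝ) : (mT x) 0 0 = 1 := rfl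
@[simp] lemma mT01 (x : ℝ) : (mT x) 0 1 = x := rfl
@[simp] lemma mT10 (x : ℝ) : (mT x) 1 0 = 0 := rfl
@[simp] lemma mT11 (x : ℝ) : (mT x) 1 1 = 1 := rfl
@[simp] lemma mD00 (u : ℝ) (hu : 0 < u) : (mD u hu) 0 0 = Real.sqrt u := rfl
@[simp] lemma mD01 (u : ℝ) (hu : 0 < u) : (mD u hu) 0 1 = 0 := rfl
@[simp] lemma mD10 (u : ℝ) (hu : 0 < u) : (mD u hu) 1 0 = 0 := rfl
@[simp] lemma mD11 (u : ℝ) (hu : 0 < u) : (mD u hu) 1 1 = (Real.sqrt u)⁻¹ := rfl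
@[simp] lemma mK00 (c s : ℝ) (h : c ^ 2 + s ^ 2 = 1) : (mK c s h) 0 0 = c := rfl
@[simp] lemma mK01 (c s : ℝ) (h : c ^ 2 + s ^ 2 = 1) : (mK c s h) 0 1 = s := rfl
@[simp] lemma mK10 (c s : ℝ) (h : c ^ 2 + s ^ 2 = 1) : (mK c s h) 1 0 = -s := rfl
@[simp] lemma mK11 (c s : ℝ) (h : c ^ 2 + s ^ 2 = 1) : (mK c s h) 1 1 = c := rfl
@[simp] lemma mS00 : mS 0 0 = 0 := rfl
@[simp] lemma mS01 : mS 0 1 = -1 := rfl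
@[simp] lemma mS10 : mS 1 0 = 1 := rfl
@[simp] lemma mS11 : mS 1 1 = 0 := rfl

lemma mT_smul_re (x : ℝ) (z : ℍ) : (mT x • z).re = z.re + x := by
  rw [sl2_smul_re]; simp

lemma mT_smul_im (x : ℝ) (z : ℍ) : (mT x • z).im = z.im := by
  rw [sl2_smul_im]; simp

lemma mD_smul_re (u : ℝ) (hu : 0 < u) (z : ℍ) : (mD u hu • z).re = u * z.re := by
  have hs : Real.sqrt u ≠ 0 := (Real.sqrt_pos.mpr hu).ne'
  have h2 : ((Real.sqrt u)⁻¹) ^ 2 = u⁻¹ := by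
    rw [inv_pow, Real.sq_sqrt hu.le]
  rw [sl2_smul_re]; simp [hs, h2]
  ring

lemma mD_smul_im (u : ℝ) (hu : 0 < u) (z : ℍ) : (mD u hu • z).im = u * z.im := by
  have hs : Real.sqrt u ≠ 0 := (Real.sqrt_pos.mpr hu).ne'
  have h2 : ((Real.sqrt u)⁻¹) ^ 2 = u⁻¹ := by
    rw [inv_pow, Real.sq_sqrt hu.le]
  rw [sl2_smul_im]; simp [hs, h2]
  ring

lemma sig_zero : sig 0 = UpperHalfPlane.I := by
  apply UpperHalfPlane.ext'
  · simp [UpperHalfPlane.I_re]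
  · simp [UpperHalfPlane.I_im]

lemma mK_smul_I (c s : ℝ) (h : c ^ 2 + s ^ 2 = 1) :
    mK c s h • UpperHalfPlane.I = UpperHalfPlane.I := by
  apply UpperHalfPlane.ext'
  · rw [sl2_smul_re]
    simp [UpperHalfPlane.I_re, UpperHalfPlane.I_im]
    left; ring
  · rw [sl2_smul_im]
    simp [UpperHalfPlane.I_re, UpperHalfPlane.I_im]
    nlinarith [h]

lemma mS_smul_sig (t : ℝ) : mS • sig t = sig (-t) := by
  apply UpperHalfPlane.ext'
  · rw [sl2_smul_re]; simp
  · rw [sl2_smul_im]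
    simp [Real.exp_neg]
    rw [sq]
    field_simp

lemma exists_smul_eq_I (z : ℍ) : ∃ g : SL2, g • z = UpperHalfPlane.I := by
  have hv : 0 < (1 : ℝ) / z.im := by have := z.im_pos; positivity
  refine ⟨mD (1 / z.im) hv * mT (-z.re), ?_⟩
  rw [mul_smul]
  apply UpperHalfPlane.ext'
  · rw [mD_smul_re, mT_smul_re]
    simp [UpperHalfPlane.I_re]
  · rw [mD_smul_im, mT_smul_im]
    have := z.im_ne_zero
    field_simp [UpperHalfPlane.I_im]
    exact UpperHalfPlane.I_im.symm


lemma exists_rot (z : ℍ) (hx : z.re ≠ 0) :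
    ∃ g : SL2, (g • z).re = 0 ∧ g • UpperHalfPlane.I = UpperHalfPlane.I := by
  set x := z.re with hxdef
  set ρ := z.re ^ 2 + z.im ^ 2 with hρdef
  set D₀ : ℝ := 1 - ρ with hD₀
  set R : ℝ := Real.sqrt (D₀ ^ 2 + 4 * x ^ 2) with hRdef
  have hx2 : 0 < x ^ 2 := by positivity
  have hRpos : 0 < R := Real.sqrt_pos.mpr (by nlinarith)
  have hRsq : R ^ 2 = D₀ ^ 2 + 4 * x ^ 2 := Real.sq_sqrt (by nlinarith)
  set C : ℝ := -D₀ / R with hCdef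
  set S : ℝ := 2 * x / R with hSdef
  have hCS : C ^ 2 + S ^ 2 = 1 := by
    rw [hCdef, hSdef]
    field_simp
    linarith [hRsq]
  have h1C : 0 < 1 + C := by
    rw [hCdef]
    have hRD : D₀ < R := by nlinarith [le_abs_self D₀, abs_nonneg D₀, sq_abs D₀, Real.sqrt_nonneg (D₀ ^ 2 + 4 * x ^ 2)]
    have : -D₀ / R > -1 := by
      rw [gt_iff_lt, neg_lt, ← neg_div, neg_neg, div_lt_one hRpos]
      exact hRD
    linarith
  set c₀ : ℝ := Real.sqrt ((1 + C) / 2) with hc₀def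
  have hc₀pos : 0 < c₀ := Real.sqrt_pos.mpr (by linarith)
  have hc₀sq : c₀ ^ 2 = (1 + C) / 2 := Real.sq_sqrt (by linarith)
  set s₀ : ℝ := S / (2 * c₀) with hs₀def
  have hs₀sq : s₀ ^ 2 = (1 - C) / 2 := by
    rw [hs₀def, div_pow]
    have : (2 * c₀) ^ 2 = 4 * ((1 + C) / 2) := by rw [mul_pow, hc₀sq]; ring
    rw [this]
    rw [div_eq_div_iff (by linarith) (by norm_num)]
    nlinarith [hCS]
  have hcs : c₀ ^ 2 + s₀ ^ 2 = 1 := by rw [hc₀sq, hs₀sq]; ring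
  have hcsprod : c₀ * s₀ = S / 2 := by
    rw [hs₀def]
    field_simp
  have hcsdiff : c₀ ^ 2 - s₀ ^ 2 = C := by rw [hc₀sq, hs₀sq]; ring
  refine ⟨mK c₀ s₀ hcs, ?_, mK_smul_I c₀ s₀ hcs⟩
  rw [sl2_smul_re]
  simp only [mK00, mK01, mK10, mK11]
  apply div_eq_zero_iff.mpr
  left
  have hnum : c₀ * -s₀ * ρ + (c₀ * c₀ + s₀ * -s₀) * x + s₀ * c₀
      = (c₀ * s₀) * (1 - ρ) + (c₀ ^ 2 - s₀ ^ 2) * x := by ring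
  rw [← hρdef, ← hxdef, hnum, hcsprod, hcsdiff, hSdef, hCdef]
  field_simp
  ring

lemma mS_smul_I : mS • UpperHalfPlane.I = UpperHalfPlane.I := by
  rw [← sig_zero, mS_smul_sig, neg_zero]

lemma two_point (z w : ℍ) :
    ∃ g : SL2, g • z = UpperHalfPlane.I ∧ g • w = sig (dist z w) := by
  have step : ∃ g : SL2, g • z = UpperHalfPlane.I ∧ (g • w).re = 0 := by
    obtain ⟨g₁, hg₁⟩ := exists_smul_eq_I z
    by_cases h : (g₁ • w).re = 0
    · exact ⟨g₁, hg₁, h⟩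
    · obtain ⟨k, hk1, hk2⟩ := exists_rot (g₁ • w) h
      exact ⟨k * g₁, by rw [mul_smul, hg₁, hk2], by rw [mul_smul]; exact hk1⟩
  obtain ⟨g, hgz, hgw⟩ := step
  obtain ⟨u, hu⟩ := (mem_range_sig_iff _).mpr hgw
  have hd : dist z w = |u| := by
    rw [← dist_smul g z w, hgz, ← hu, ← sig_zero, dist_sig_sig]
    simp
  rcases le_or_gt 0 u with h0 | h0
  · refine ⟨g, hgz, ?_⟩
    rw [← hu, hd, abs_of_nonneg h0]
  · refine ⟨mS * g, by rw [mul_smul, hgz, mS_smul_I], ?_⟩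
    rw [mul_smul, ← hu, mS_smul_sig, hd, abs_of_neg h0]

lemma re_eq_zero_of_eq (z : ℍ) {t₁ t₂ : ℝ} (h : t₁ < t₂)
    (hc : (Real.cosh (t₂ - t₁) - Real.cosh (dist (sig t₁) z) * Real.cosh (dist (sig t₂) z)) ^ 2
        = (Real.cosh (dist (sig t₁) z) ^ 2 - 1) * (Real.cosh (dist (sig t₂) z) ^ 2 - 1)) :
    z.re = 0 := by
  set x := z.re
  set v := z.im
  set y₁ := Real.exp t₁ with hy₁
  set y₂ := Real.exp t₂ with hy₂
  have hv : 0 < v := z.im_pos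
  have hy₁p : 0 < y₁ := Real.exp_pos t₁
  have hy₂p : 0 < y₂ := Real.exp_pos t₂
  have hylt : y₁ < y₂ := Real.exp_lt_exp.mpr h
  have e1 : Real.cosh (dist (sig t₁) z) = (x ^ 2 + v ^ 2 + y₁ ^ 2) / (2 * v * y₁) := by
    rw [dist_comm, cosh_dist_sig]
  have e2 : Real.cosh (dist (sig t₂) z) = (x ^ 2 + v ^ 2 + y₂ ^ 2) / (2 * v * y₂) := by
    rw [dist_comm, cosh_dist_sig]
  have e0 : Real.cosh (t₂ - t₁) = (y₁ ^ 2 + y₂ ^ 2) / (2 * y₁ * y₂) := by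
    have hd : dist (sig t₁) (sig t₂) = t₂ - t₁ := by
      rw [dist_sig_sig, abs_of_nonpos (by linarith)]; ring
    rw [← hd, cosh_dist_sig (sig t₁) t₂]
    simp [← hy₁, ← hy₂]
  rw [e0, e1, e2] at hc
  have key : x ^ 2 * ((y₂ ^ 2 - y₁ ^ 2) ^ 2 * (256 * v ^ 6 * y₁ ^ 4 * y₂ ^ 4)) = 0 := by
    field_simp at hc
    linear_combination (-64 * v ^ 4 * y₁ ^ 4 * y₂ ^ 4) * hc
  have hd2 : 0 < y₂ ^ 2 - y₁ ^ 2 := by nlinarith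
  have hpos : 0 < (y₂ ^ 2 - y₁ ^ 2) ^ 2 * (256 * v ^ 6 * y₁ ^ 4 * y₂ ^ 4) := by positivity
  have hx2 : x ^ 2 = 0 := (mul_eq_zero.mp key).resolve_right hpos.ne'
  exact pow_eq_zero_iff two_ne_zero |>.mp hx2

lemma classify {γ : ℝ → ℍ} {Iset : Set ℝ}
    (hγ : ∀ s ∈ Iset, ∀ t ∈ Iset, dist (γ s) (γ t) = |s - t|)
    {s₀ s₁ : ℝ} (h₀ : s₀ ∈ Iset) (h₁ : s₁ ∈ Iset) (hlt : s₀ < s₁) :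
    ∃ g : SL2, ∀ t ∈ Iset, γ t = g • sig (t - s₀) := by
  set d := s₁ - s₀ with hddef
  have hd : 0 < d := by simp [hddef]; linarith
  have hdist : dist (γ s₀) (γ s₁) = d := by
    rw [hγ s₀ h₀ s₁ h₁, abs_of_nonpos (by linarith), hddef]; ring
  obtain ⟨g₀, hg0, hg1⟩ := two_point (γ s₀) (γ s₁)
  rw [hdist] at hg1
  refine ⟨g₀⁻¹, fun t ht => ?_⟩
  set w := g₀ • γ t with hwdef
  have hr₁ : dist (sig 0) w = |t - s₀| := by
    rw [sig_zero, ← hg0, hwdef, dist_smul, hγ s₀ h₀ t ht, abs_sub_comm]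
  have hr₂ : dist (sig d) w = |t - s₁| := by
    rw [← hg1, hwdef, dist_smul, hγ s₁ h₁ t ht, abs_sub_comm]
  set r₁ := dist (sig 0) w
  set r₂ := dist (sig d) w
  have habs : r₁ + r₂ = d ∨ r₁ - r₂ = d ∨ r₂ - r₁ = d := by
    rcases le_total t s₀ with h' | h'
    · right; right
      rw [hr₁, hr₂, abs_of_nonpos (by linarith), abs_of_nonpos (by linarith), hddef]; ring
    · rcases le_total t s₁ with h'' | h''
      · left
        rw [hr₁, hr₂, abs_of_nonneg (by linarith), abs_of_nonpos (by linarith), hddef]; ring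
      · right; left
        rw [hr₁, hr₂, abs_of_nonneg (by linarith), abs_of_nonneg (by linarith), hddef]; ring
  have hc : (Real.cosh (d - 0) - Real.cosh r₁ * Real.cosh r₂) ^ 2
      = (Real.cosh r₁ ^ 2 - 1) * (Real.cosh r₂ ^ 2 - 1) := by
    have hs1 : Real.sinh r₁ ^ 2 = Real.cosh r₁ ^ 2 - 1 := Real.sinh_sq r₁
    have hs2 : Real.sinh r₂ ^ 2 = Real.cosh r₂ ^ 2 - 1 := Real.sinh_sq r₂
    rcases habs with h' | h' | h'
    · rw [sub_zero, ← h', Real.cosh_add]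
      rw [← hs1, ← hs2]; ring
    · rw [sub_zero, ← h', Real.cosh_sub]
      rw [← hs1, ← hs2]; ring
    · rw [sub_zero, ← h', Real.cosh_sub]
      rw [← hs1, ← hs2]; ring
  have hre : w.re = 0 := re_eq_zero_of_eq w hd (by simpa using hc)
  obtain ⟨u, hu⟩ := (mem_range_sig_iff w).mpr hre
  have h1 : |u| = |t - s₀| := by
    rw [← hr₁]
    show |u| = dist (sig 0) w
    rw [← hu, dist_sig_sig]; simp
  have h2 : |u - d| = |t - s₁| := by
    rw [← hr₂]
    show |u - d| = dist (sig d) w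
    rw [← hu, dist_sig_sig, abs_sub_comm]
  have hs₁eq : s₁ = s₀ + d := by rw [hddef]; ring
  have q1 : u ^ 2 = (t - s₀) ^ 2 := by
    have := congrArg (· ^ 2) h1
    simpa [sq_abs] using this
  have q2 : (u - d) ^ 2 = (t - s₀ - d) ^ 2 := by
    have := congrArg (· ^ 2) h2
    simpa [sq_abs, hs₁eq, sub_sub] using this
  have hu_eq : u = t - s₀ := by
    have h3 : 2 * d * u = 2 * d * (t - s₀) := by linear_combination q1 - q2
    exact mul_left_cancel₀ (by positivity) h3
  rw [← hu_eq, hu, hwdef, inv_smul_smul]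

lemma infDist_smul_sig (m : SL2) (τ : ℝ) :
    infDist (m • sig τ) (Set.range sig)
      = Real.arsinh |m 0 0 * m 1 0 * Real.exp τ + m 0 1 * m 1 1 * Real.exp (-τ)| := by
  rw [infDist_sig, sl2_smul_sig_re]
  have him : 0 < (m • sig τ).im := (m • sig τ).im_pos
  rw [abs_mul, abs_of_pos him, mul_div_assoc, div_self him.ne', mul_one]

lemma sign_const {f : ℝ → ℝ} (hf : Continuous f) {a b : ℝ} (hab : a ≤ b)
    (h : ∀ s ∈ Icc a b, f s ≠ 0) :
    (∀ s ∈ Icc a b, 0 < f s) ∨ (∀ s ∈ Icc a b, 0 < -f s) := by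
  rcases lt_or_gt_of_ne (h a ⟨le_refl a, hab⟩) with ha | ha
  · right
    intro s hs
    by_contra hneg
    push_neg at hneg
    have hfs : 0 < f s := lt_of_le_of_ne (by linarith) (Ne.symm (h s hs))
    obtain ⟨c, hc, hc0⟩ : ∃ c ∈ Icc a s, f c = 0 := by
      have hsub : Icc (f a) (f s) ⊆ f '' Icc a s :=
        intermediate_value_Icc hs.1 hf.continuousOn
      obtain ⟨c, hc, hc0⟩ := hsub ⟨ha.le, hfs.le⟩
      exact ⟨c, hc, hc0⟩
    exact h c ⟨hc.1, le_trans hc.2 hs.2⟩ hc0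
  · left
    intro s hs
    by_contra hneg
    push_neg at hneg
    have hfs : f s < 0 := lt_of_le_of_ne hneg (h s hs)
    obtain ⟨c, hc, hc0⟩ : ∃ c ∈ Icc a s, f c = 0 := by
      have hsub : Icc (f s) (f a) ⊆ f '' Icc a s :=
        intermediate_value_Icc' hs.1 hf.continuousOn
      obtain ⟨c, hc, hc0⟩ := hsub ⟨hfs.le, ha.le⟩
      exact ⟨c, hc, hc0⟩
    exact h c ⟨hc.1, le_trans hc.2 hs.2⟩ hc0

section Calc

variable (A B : ℝ)

/-- χ s = A eˢ + B e⁻ˢ -/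
def chi (s : ℝ) : ℝ := A * Real.exp s + B * Real.exp (-s)

/-- χ' s = A eˢ - B e⁻ˢ -/
def chi' (s : ℝ) : ℝ := A * Real.exp s - B * Real.exp (-s)

lemma hasDerivAt_chi (s : ℝ) : HasDerivAt (chi A B) (chi' A B s) s := by
  have h1 : HasDerivAt (fun s : ℝ => Real.exp s) (Real.exp s) s := Real.hasDerivAt_exp s
  have h2 : HasDerivAt (fun s : ℝ => Real.exp (-s)) (Real.exp (-s) * (-1)) s :=
    ((hasDerivAt_id s).neg).exp
  have := (h1.const_mul A).add (h2.const_mul B)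
  refine this.congr_deriv ?_
  unfold chi'
  ring

lemma hasDerivAt_chi' (s : ℝ) : HasDerivAt (chi' A B) (chi A B s) s := by
  have h1 : HasDerivAt (fun s : ℝ => Real.exp s) (Real.exp s) s := Real.hasDerivAt_exp s
  have h2 : HasDerivAt (fun s : ℝ => Real.exp (-s)) (Real.exp (-s) * (-1)) s :=
    ((hasDerivAt_id s).neg).exp
  have := (h1.const_mul A).sub (h2.const_mul B)
  refine this.congr_deriv ?_
  unfold chi
  ring

lemma contDiff_chi : ContDiff ℝ (⊤ : ℕ∞) (chi A B) := by
  unfold chi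
  exact (contDiff_const.mul Real.contDiff_exp).add
    (contDiff_const.mul (Real.contDiff_exp.comp contDiff_neg))

lemma chi_sq_diff (s : ℝ) : chi A B s ^ 2 - chi' A B s ^ 2 = 4 * (A * B) := by
  unfold chi chi'
  have h : Real.exp s * Real.exp (-s) = 1 := by
    rw [← Real.exp_add]; simp
  nlinarith [h]

/-- the squared-arsinh function -/
def Gfun (s : ℝ) : ℝ := Real.arsinh (chi A B s) ^ 2

lemma contDiffAt_arsinh_omega (x : ℝ) : ContDiffAt ℝ (⊤ : ℕ∞) Real.arsinh x := by
  have hsq : ContDiffAt ℝ (⊤ : ℕ∞) (fun x : ℝ => 1 + x ^ 2) x :=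
    (contDiff_const.add (contDiff_id.pow 2)).contDiffAt
  have h1 : ContDiffAt ℝ (⊤ : ℕ∞) (fun x : ℝ => x + Real.sqrt (1 + x ^ 2)) x := by
    refine contDiffAt_id.add ?_
    exact (Real.contDiffAt_sqrt (by positivity : (1 + x ^ 2 : ℝ) ≠ 0)).comp x hsq
  have hpos : 0 < x + Real.sqrt (1 + x ^ 2) := by
    have h2 : Real.sqrt (1 + x ^ 2) ^ 2 = 1 + x ^ 2 := Real.sq_sqrt (by positivity)
    nlinarith [Real.sqrt_nonneg (1 + x ^ 2)]
  have hlog : ContDiffAt ℝ (⊤ : ℕ∞) Real.log (x + Real.sqrt (1 + x ^ 2)) :=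
    Real.contDiffAt_log.mpr hpos.ne'
  have := hlog.comp x h1
  exact this

lemma contDiffAt_Gfun (t : ℝ) : ContDiffAt ℝ (⊤ : ℕ∞) (Gfun A B) t := by
  unfold Gfun
  exact ((contDiffAt_arsinh_omega (chi A B t)).comp t (contDiff_chi A B).contDiffAt).pow 2

/-- first derivative expression -/
def G1 (s : ℝ) : ℝ :=
  2 * Real.arsinh (chi A B s) * ((Real.sqrt (1 + chi A B s ^ 2))⁻¹ * chi' A B s)

lemma hasDerivAt_Gfun (s : ℝ) : HasDerivAt (Gfun A B) (G1 A B s) s := by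
  have h1 : HasDerivAt (fun s => Real.arsinh (chi A B s))
      ((Real.sqrt (1 + chi A B s ^ 2))⁻¹ * chi' A B s) s :=
    (Real.hasDerivAt_arsinh (chi A B s)).comp s (hasDerivAt_chi A B s)
  have h2 := h1.pow 2
  refine h2.congr_deriv ?_
  unfold G1
  ring

/-- second derivative expression -/
def G2 (s : ℝ) : ℝ :=
  2 * ((Real.sqrt (1 + chi A B s ^ 2))⁻¹ * chi' A B s) ^ 2
    + 2 * Real.arsinh (chi A B s)
      * (chi A B s * (1 + 4 * (A * B)) / Real.sqrt (1 + chi A B s ^ 2) ^ 3)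

lemma hasDerivAt_G1 (s : ℝ) : HasDerivAt (G1 A B) (G2 A B s) s := by
  set W := Real.sqrt (1 + chi A B s ^ 2) with hW
  have hq : (0:ℝ) < 1 + chi A B s ^ 2 := by positivity
  have hWpos : 0 < W := Real.sqrt_pos.mpr hq
  have hWsq : W ^ 2 = 1 + chi A B s ^ 2 := Real.sq_sqrt hq.le
  have hqd : HasDerivAt (fun s => 1 + chi A B s ^ 2)
      (2 * chi A B s ^ 1 * chi' A B s) s :=
    (((hasDerivAt_chi A B s).pow 2)).const_add 1
  have hw : HasDerivAt (fun s => Real.sqrt (1 + chi A B s ^ 2))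
      ((2 * chi A B s ^ 1 * chi' A B s) / (2 * W)) s := hqd.sqrt hq.ne'
  have hwinv : HasDerivAt (fun s => (Real.sqrt (1 + chi A B s ^ 2))⁻¹)
      (-((2 * chi A B s ^ 1 * chi' A B s) / (2 * W)) / W ^ 2) s := hw.inv hWpos.ne'
  have hU : HasDerivAt (fun s => (Real.sqrt (1 + chi A B s ^ 2))⁻¹ * chi' A B s)
      ((-((2 * chi A B s ^ 1 * chi' A B s) / (2 * W)) / W ^ 2) * chi' A B s
        + W⁻¹ * chi A B s) s := by
    have := hwinv.mul (hasDerivAt_chi' A B s)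
    exact this
  have harsinh : HasDerivAt (fun s => 2 * Real.arsinh (chi A B s))
      (2 * (W⁻¹ * chi' A B s)) s := by
    have h1 : HasDerivAt (fun s => Real.arsinh (chi A B s)) (W⁻¹ * chi' A B s) s :=
      (Real.hasDerivAt_arsinh (chi A B s)).comp s (hasDerivAt_chi A B s)
    exact h1.const_mul 2
  have hprod := harsinh.mul hU
  refine hprod.congr_deriv ?_
  unfold G2
  rw [← hW]
  have e1 : -(2 * chi A B s ^ 1 * chi' A B s / (2 * W)) / W ^ 2 * chi' A B s
      + W⁻¹ * chi A B s = chi A B s * (1 + 4 * (A * B)) / W ^ 3 := by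
    rw [← chi_sq_diff A B s]
    rw [show (1:ℝ) + (chi A B s ^ 2 - chi' A B s ^ 2) = W ^ 2 - chi' A B s ^ 2 by
      rw [hWsq]; ring]
    field_simp
    ring
  rw [e1]
  ring

lemma G2_pos (s : ℝ) (hχ : 0 < chi A B s) (hK : 0 ≤ 1 + 4 * (A * B)) :
    0 < G2 A B s := by
  set W := Real.sqrt (1 + chi A B s ^ 2) with hW
  have hq : (0:ℝ) < 1 + chi A B s ^ 2 := by positivity
  have hWpos : 0 < W := Real.sqrt_pos.mpr hq
  have harsinh : 0 < Real.arsinh (chi A B s) := Real.arsinh_pos_iff.mpr hχ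
  rcases eq_or_lt_of_le hK with hK0 | hKpos
  · have hchi' : chi' A B s ^ 2 = chi A B s ^ 2 + 1 := by
      have := chi_sq_diff A B s
      nlinarith [this, hK0]
    have h1 : 0 < (W⁻¹ * chi' A B s) ^ 2 := by
      have : chi' A B s ≠ 0 := by
        intro h0
        rw [h0] at hchi'
        nlinarith [sq_nonneg (chi A B s)]
      positivity
    have h2 : chi A B s * (1 + 4 * (A * B)) / W ^ 3 = 0 := by
      rw [← hK0]
      simp
    unfold G2
    rw [← hW, h2]
    simp only [mul_zero, add_zero]
    linarith
  · have h1 : 0 ≤ 2 * ((W⁻¹) * chi' A B s) ^ 2 := by positivity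
    have h2 : 0 < 2 * Real.arsinh (chi A B s)
        * (chi A B s * (1 + 4 * (A * B)) / W ^ 3) := by positivity
    unfold G2
    rw [← hW]
    linarith

end Calc

lemma main_calc {F : ℝ → ℝ} {a b : ℝ} (hab : a < b) (A B : ℝ)
    (hF : ∀ s ∈ Icc a b, F s = Real.arsinh (chi A B s) ^ 2)
    (hχpos : ∀ s ∈ Icc a b, 0 < chi A B s)
    (hK : 0 ≤ 1 + 4 * (A * B)) (t : ℝ) (ht : t ∈ Icc a b) :
    ContDiffWithinAt ℝ (⊤ : ℕ∞) F (Icc a b) t ∧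
      0 < derivWithin (derivWithin F (Icc a b)) (Icc a b) t := by
  have hFG : EqOn F (Gfun A B) (Icc a b) := fun s hs => hF s hs
  constructor
  · exact ((contDiffAt_Gfun A B t).contDiffWithinAt).congr (fun s hs => hFG hs) (hFG ht)
  · have hud := uniqueDiffOn_Icc hab
    have h1 : EqOn (derivWithin F (Icc a b)) (derivWithin (Gfun A B) (Icc a b)) (Icc a b) :=
      fun s hs => derivWithin_congr hFG (hFG hs)
    have h2 : EqOn (derivWithin (Gfun A B) (Icc a b)) (G1 A B) (Icc a b) := fun s hs => by
      rw [(hasDerivAt_Gfun A B s).differentiableAt.derivWithin (hud s hs)]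
      exact (hasDerivAt_Gfun A B s).deriv
    have h3 : derivWithin (derivWithin F (Icc a b)) (Icc a b) t
        = derivWithin (G1 A B) (Icc a b) t :=
      derivWithin_congr (fun s hs => (h1 hs).trans (h2 hs)) ((h1 ht).trans (h2 ht))
    rw [h3, (hasDerivAt_G1 A B t).differentiableAt.derivWithin (hud t ht),
      (hasDerivAt_G1 A B t).deriv]
    exact G2_pos A B t (hχpos t ht) hK

lemma chi_neg (A B s : ℝ) : chi (-A) (-B) s = -chi A B s := by unfold chi; ring

theorem stmt_1 (γ : ℝ → ℍ) (hγ : IsUnitSpeedGeodesicOn γ Set.univ)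
    (α : ℝ → ℍ) (a b : ℝ) (hab : a < b)
    (hα : IsUnitSpeedGeodesicOn α (Icc a b))
    (hdisj : Disjoint (α '' Icc a b) (Set.range γ)) :
    ∀ t ∈ Icc a b,
      ContDiffWithinAt ℝ (⊤ : ℕ∞) (fun s => infDist (α s) (Set.range γ) ^ 2) (Icc a b) t ∧
      0 < derivWithin
            (derivWithin (fun s => infDist (α s) (Set.range γ) ^ 2) (Icc a b))
            (Icc a b) t := by
  obtain ⟨g, hg⟩ := classify hγ (mem_univ 0) (mem_univ 1) one_pos
  obtain ⟨h, hh⟩ := classify hα ⟨le_refl a, hab.le⟩ ⟨hab.le, le_refl b⟩ hab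
  have hrange : Set.range γ = (fun w => g • w) '' Set.range sig := by
    ext w
    constructor
    · rintro ⟨t, rfl⟩
      exact ⟨sig (t - 0), ⟨t - 0, rfl⟩, (hg t (mem_univ t)).symm⟩
    · rintro ⟨v, ⟨τ, rfl⟩, rfl⟩
      refine ⟨τ, ?_⟩
      rw [hg τ (mem_univ τ), sub_zero]
  set m := g⁻¹ * h with hm
  have hdet := SL2.det_eq m
  set P := m 0 0 * m 1 0 with hP
  set Q := m 0 1 * m 1 1 with hQ
  set A := P * Real.exp (-a) with hA
  set B := Q * Real.exp a with hB
  have hexpprod : Real.exp (-a) * Real.exp a = 1 := by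
    rw [← Real.exp_add]; simp
  have hchiψ : ∀ s : ℝ, chi A B s = P * Real.exp (s - a) + Q * Real.exp (-(s - a)) := by
    intro s
    unfold chi
    have e1 : Real.exp (s - a) = Real.exp s * Real.exp (-a) := by
      rw [← Real.exp_add]; ring_nf
    have e2 : Real.exp (-(s - a)) = Real.exp (-s) * Real.exp a := by
      rw [← Real.exp_add]; ring_nf
    rw [e1, e2, hA, hB]
    ring
  have hhg : ∀ s : ℝ, h • sig (s - a) = g • (m • sig (s - a)) := by
    intro s
    rw [hm, ← mul_smul, mul_inv_cancel_left]
  have hαval : ∀ s ∈ Icc a b, infDist (α s) (Set.range γ) = Real.arsinh |chi A B s| := by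
    intro s hs
    rw [hh s hs, hrange, hhg s, infDist_image (isometry_smul ℍ g), infDist_smul_sig,
      hchiψ s]
  have hψne : ∀ s ∈ Icc a b, chi A B s ≠ 0 := by
    intro s hs h0
    have hre : (m • sig (s - a)).re = 0 := by
      rw [sl2_smul_sig_re]
      have h4 : m 0 0 * m 1 0 * Real.exp (s - a) + m 0 1 * m 1 1 * Real.exp (-(s - a))
          = chi A B s := (hchiψ s).symm
      rw [h4, h0, zero_mul]
    have hmem : m • sig (s - a) ∈ Set.range sig := (mem_range_sig_iff _).mpr hre
    have hαmem : α s ∈ Set.range γ := by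
      rw [hrange, hh s hs, hhg s]
      exact ⟨_, hmem, rfl⟩
    exact absurd hαmem (Set.disjoint_left.mp hdisj ⟨s, hs, rfl⟩)
  have hAB : A * B = P * Q := by
    rw [hA, hB]
    calc P * Real.exp (-a) * (Q * Real.exp a) = P * Q * (Real.exp (-a) * Real.exp a) := by ring
    _ = P * Q := by rw [hexpprod, mul_one]
  have hK : 0 ≤ 1 + 4 * (A * B) := by
    have hKeq : 1 + 4 * (A * B) = (m 0 0 * m 1 1 + m 0 1 * m 1 0) ^ 2 := by
      rw [hAB, hP, hQ]
      linear_combination (-(m 0 0 * m 1 1) + m 0 1 * m 1 0 - 1) * hdet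
    rw [hKeq]
    positivity
  have hcont : Continuous (chi A B) := (contDiff_chi A B).continuous
  intro t ht
  rcases sign_const hcont hab.le hψne with hsgn | hsgn
  · refine main_calc hab A B ?_ hsgn hK t ht
    intro s hs
    rw [hαval s hs, abs_of_pos (hsgn s hs)]
  · have hψne' : ∀ s ∈ Icc a b, 0 < chi (-A) (-B) s := by
      intro s hs
      rw [chi_neg]
      exact hsgn s hs
    refine main_calc hab (-A) (-B) ?_ hψne' (by rw [show (-A) * (-B) = A * B by ring]; exact hK)
      t ht
    intro s hs
    rw [hαval s hs, chi_neg]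
    congr 2
    rw [abs_of_neg (by linarith [hsgn s hs])]

end
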